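/- arXiv:2403.00916 — 4 statements merged into one kernel-verified Lean document; each statement's English description precedes it below -/
import Mathlib

section
/- The Minkowski causal order on M₁ = ℝ × ℝ (with (t,x) ⪯ (s,y) iff |y − x| ≤ s − t) is not conical: the two-element sets L₁ = {(0,0), (0,2)} and L₂ = {(1/2, 1/2), (0,2)} are distinct, each consists of two incomparable points (hence span(L₁) = L₁ and span(L₂) = L₂), and yet f(L₁) = f(L₂). -/
/-- 1+1-dimensional Minkowski space-time `M₁ := ℝ × ℝ` (time, space). -/
structure Mink1 where
  t : ℝ
  x : ℝ

/-- The Minkowski causal order on `M₁`: `(t,x) ⪯ (s,y)` iff `|y − x| ≤ s − t`. -/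
instance : PartialOrder Mink1 where
  le p q := |q.x - p.x| ≤ q.t - p.t
  le_refl p := by simp
  le_trans p q r hpq hqr := by
    have hpq' : |q.x - p.x| ≤ q.t - p.t := hpq
    have hqr' : |r.x - q.x| ≤ r.t - q.t := hqr
    have htri : |r.x - p.x| ≤ |r.x - q.x| + |q.x - p.x| := abs_sub_le _ _ _
    show |r.x - p.x| ≤ r.t - p.t
    linarith
  le_antisymm p q hpq hqp := by
    have hpq' : |q.x - p.x| ≤ q.t - p.t := hpq
    have hqp' : |p.x - q.x| ≤ p.t - q.t := hqp
    have hrev : |p.x - q.x| = |q.x - p.x| := abs_sub_comm _ _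
    have hnn : (0:ℝ) ≤ |q.x - p.x| := abs_nonneg _
    have hx0 : |q.x - p.x| = 0 := by linarith
    have hx : q.x = p.x := sub_eq_zero.mp (abs_eq_zero.mp hx0)
    have ht : p.t = q.t := by linarith
    cases p; cases q; simp_all

/-- The causal future `J⁺(p) = {q : p ≤ q}` of a point in a partially ordered set. -/
def Jplus {T : Type*} [PartialOrder T] (p : T) : Set T := {q : T | p ≤ q}

/-- The joint future `f(L) = ⋂_{p ∈ L} J⁺(p)` of a subset of a poset (with `f(∅) = T`). -/
def jointFuture {T : Type*} [PartialOrder T] (L : Set T) : Set T := ⋂ p ∈ L, Jplus p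

/-- The spanning set `span(L)`: the union of all subsets `L' ⊆ L` with
`f(L') = f(L)` such that no strict subset `L'' ⊊ L'` satisfies `f(L'') = f(L)`. -/
def spanS {T : Type*} [PartialOrder T] (L : Set T) : Set T :=
  {x : T | ∃ L' : Set T, L' ⊆ L ∧ x ∈ L' ∧ jointFuture L' = jointFuture L ∧
    ∀ L'' : Set T, L'' ⊂ L' → jointFuture L'' ≠ jointFuture L}

/-- A poset is conical if for all nonempty finite subsets `L₁, L₂`,
`f(L₁) = f(L₂)` implies `span(L₁) = span(L₂)`. -/
def Conical (T : Type*) [PartialOrder T] : Prop :=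
  ∀ L₁ L₂ : Set T, L₁.Finite → L₂.Finite → L₁.Nonempty → L₂.Nonempty →
    jointFuture L₁ = jointFuture L₂ → spanS L₁ = spanS L₂

/-!
In the null coordinates `t - x` and `t + x` the causal order of `M₁` is the product order on `ℝ²`,
so the joint future of two points is the causal future of their componentwise join. The pairs
`{(0,0), (0,2)}` and `{(1/2,1/2), (0,2)}` have the same join, the point `(1,1)`, hence the same
joint future. A pair of incomparable points is its own spanning set, since dropping either point
enlarges the joint future by the remaining one; so the two spanning sets differ.
-/

section JointFuture

variable {T : Type*} [PartialOrder T]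

lemma mem_Jplus {p q : T} : q ∈ Jplus p ↔ p ≤ q := Iff.rfl

lemma mem_jointFuture {L : Set T} {q : T} : q ∈ jointFuture L ↔ ∀ p ∈ L, p ≤ q := by
  simp [jointFuture, Jplus]

lemma mem_jointFuture_pair {a b q : T} : q ∈ jointFuture {a, b} ↔ a ≤ q ∧ b ≤ q := by
  simp [mem_jointFuture]

lemma mem_jointFuture_of_subset_singleton {L : Set T} {a : T} (h : L ⊆ {a}) :
    a ∈ jointFuture L :=
  mem_jointFuture.2 fun _ hp => (h hp).le

lemma spanS_pair {a b : T} (hab : ¬ a ≤ b) (hba : ¬ b ≤ a) :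
    spanS ({a, b} : Set T) = {a, b} := by
  refine Set.Subset.antisymm (fun _ ⟨_, hsub, hx, _⟩ => hsub hx) fun x hx => ?_
  refine ⟨{a, b}, subset_rfl, hx, rfl, fun L hL heq => ?_⟩
  obtain ⟨c, hc, hcL⟩ := Set.exists_of_ssubset hL
  have hL' : ∀ p ∈ L, p ≠ c := fun p hp hpc => hcL (hpc ▸ hp)
  rcases hc with rfl | rfl
  · have hb := mem_jointFuture_of_subset_singleton fun p hp =>
      (hL.subset hp).resolve_left (hL' p hp)
    rw [heq, mem_jointFuture_pair] at hb
    exact hab hb.1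
  · have ha := mem_jointFuture_of_subset_singleton fun p hp =>
      ((hL.subset hp).resolve_right (hL' p hp) : p = a)
    rw [heq, mem_jointFuture_pair] at ha
    exact hba ha.2

lemma not_conical_of_pairs {a b c d : T} (hab : ¬ a ≤ b) (hba : ¬ b ≤ a)
    (hcd : ¬ c ≤ d) (hdc : ¬ d ≤ c) (hne : ({a, b} : Set T) ≠ {c, d})
    (heq : jointFuture ({a, b} : Set T) = jointFuture {c, d}) : ¬ Conical T := fun hT => by
  have := hT _ _ (Set.toFinite _) (Set.toFinite _) (Set.insert_nonempty _ _)
    (Set.insert_nonempty _ _) heq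
  rw [spanS_pair hab hba, spanS_pair hcd hdc] at this
  exact hne this

end JointFuture

namespace Mink1

lemma le_iff_null {p q : Mink1} : p ≤ q ↔ p.t - p.x ≤ q.t - q.x ∧ p.t + p.x ≤ q.t + q.x := by
  change |q.x - p.x| ≤ q.t - p.t ↔ _
  rw [abs_le]
  constructor <;> rintro ⟨h₁, h₂⟩ <;> constructor <;> linarith

lemma jointFuture_pair_eq_Jplus {p q r : Mink1}
    (hu : r.t - r.x = max (p.t - p.x) (q.t - q.x)) (hv : r.t + r.x = max (p.t + p.x) (q.t + q.x)) :
    jointFuture {p, q} = Jplus r := by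
  ext s
  rw [mem_jointFuture_pair, mem_Jplus, le_iff_null, le_iff_null, le_iff_null, hu, hv,
    max_le_iff, max_le_iff]
  tauto

end Mink1

/-- 1+1-Minkowski space-time is not conical: the sets `L₁ = {(0,0), (0,2)}` and
`L₂ = {(1/2, 1/2), (0,2)}` are distinct, each consists of two incomparable points
(hence equals its own spanning set), yet they have the same joint future. -/
theorem mink1_not_conical :
    ({⟨0, 0⟩, ⟨0, 2⟩} : Set Mink1) ≠ ({⟨1/2, 1/2⟩, ⟨0, 2⟩} : Set Mink1) ∧
    (¬ (⟨0, 0⟩ : Mink1) ≤ ⟨0, 2⟩) ∧ (¬ (⟨0, 2⟩ : Mink1) ≤ ⟨0, 0⟩) ∧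
    (¬ (⟨1/2, 1/2⟩ : Mink1) ≤ ⟨0, 2⟩) ∧ (¬ (⟨0, 2⟩ : Mink1) ≤ ⟨1/2, 1/2⟩) ∧
    spanS ({⟨0, 0⟩, ⟨0, 2⟩} : Set Mink1) = ({⟨0, 0⟩, ⟨0, 2⟩} : Set Mink1) ∧
    spanS ({⟨1/2, 1/2⟩, ⟨0, 2⟩} : Set Mink1) = ({⟨1/2, 1/2⟩, ⟨0, 2⟩} : Set Mink1) ∧
    jointFuture ({⟨0, 0⟩, ⟨0, 2⟩} : Set Mink1) =
      jointFuture ({⟨1/2, 1/2⟩, ⟨0, 2⟩} : Set Mink1) ∧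
    ¬ Conical Mink1 := by
  have hne : ({⟨0, 0⟩, ⟨0, 2⟩} : Set Mink1) ≠ {⟨1/2, 1/2⟩, ⟨0, 2⟩} := fun h => by
    have h₀ : (⟨0, 0⟩ : Mink1) ∈ ({⟨1/2, 1/2⟩, ⟨0, 2⟩} : Set Mink1) := h ▸ Set.mem_insert _ _
    simp only [Set.mem_insert_iff, Set.mem_singleton_iff, Mink1.mk.injEq] at h₀
    norm_num at h₀
  have h₁ : ¬ (⟨0, 0⟩ : Mink1) ≤ ⟨0, 2⟩ := by norm_num [Mink1.le_iff_null]
  have h₂ : ¬ (⟨0, 2⟩ : Mink1) ≤ ⟨0, 0⟩ := by norm_num [Mink1.le_iff_null]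
  have h₃ : ¬ (⟨1/2, 1/2⟩ : Mink1) ≤ ⟨0, 2⟩ := by norm_num [Mink1.le_iff_null]
  have h₄ : ¬ (⟨0, 2⟩ : Mink1) ≤ ⟨1/2, 1/2⟩ := by norm_num [Mink1.le_iff_null]
  have hjf : jointFuture ({⟨0, 0⟩, ⟨0, 2⟩} : Set Mink1) =
      jointFuture {⟨1/2, 1/2⟩, ⟨0, 2⟩} := by
    rw [Mink1.jointFuture_pair_eq_Jplus (r := ⟨1, 1⟩) (by norm_num) (by norm_num),
      Mink1.jointFuture_pair_eq_Jplus (r := ⟨1, 1⟩) (by norm_num) (by norm_num)]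
  exact ⟨hne, h₁, h₂, h₃, h₄, spanS_pair h₁ h₂, spanS_pair h₃ h₄, hjf,
    not_conical_of_pairs h₁ h₂ h₃ h₄ hne hjf⟩
end

section
/- For every natural number d ≥ 2, the Minkowski causal order on M_d := ℝ × EuclideanSpace ℝ (Fin d) is join-free and meet-free: whenever p, q ∈ M_d are incomparable (neither p ⪯ q nor q ⪯ p), the pair {p, q} has no least upper bound and no greatest lower bound. -/
/-! If `m` were a least upper bound of incomparable `p` and `q`, choose two distinct unit vectors
`v₁, v₂` (this needs `d ≥ 2`) such that the light rays `p + μ (1, vᵢ)` meet the future light cone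
of `q`, at points `zᵢ`. These are upper bounds, so `p ≤ m ≤ zᵢ`; as `zᵢ` is lightlike from `p`,
equality in the triangle inequality puts `m` on the light ray from `p` through `zᵢ`. Two distinct
light rays from `p` meet only at `p`, so `m = p` and then `q ≤ p`. Time reversal turns meets into
joins. -/

/-- `d+1`-dimensional Minkowski space-time `M_d := ℝ × EuclideanSpace ℝ (Fin d)`. -/
structure Mink (d : ℕ) where
  t : ℝ
  x : EuclideanSpace ℝ (Fin d)

/-- The Minkowski causal order: `(t,x) ⪯ (s,y)` iff `‖y − x‖ ≤ s − t`. -/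
instance (d : ℕ) : PartialOrder (Mink d) where
  le p q := ‖q.x - p.x‖ ≤ q.t - p.t
  le_refl p := by simp
  le_trans p q r hpq hqr := by
    have hpq' : ‖q.x - p.x‖ ≤ q.t - p.t := hpq
    have hqr' : ‖r.x - q.x‖ ≤ r.t - q.t := hqr
    have htri : ‖r.x - p.x‖ ≤ ‖r.x - q.x‖ + ‖q.x - p.x‖ :=
      norm_sub_le_norm_sub_add_norm_sub _ _ _
    show ‖r.x - p.x‖ ≤ r.t - p.t
    linarith
  le_antisymm p q hpq hqp := by
    have hpq' : ‖q.x - p.x‖ ≤ q.t - p.t := hpq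
    have hqp' : ‖p.x - q.x‖ ≤ p.t - q.t := hqp
    have hrev : ‖p.x - q.x‖ = ‖q.x - p.x‖ := norm_sub_rev _ _
    have hnn : (0:ℝ) ≤ ‖q.x - p.x‖ := norm_nonneg _
    have hx0 : ‖q.x - p.x‖ = 0 := by linarith
    have hx : q.x = p.x := sub_eq_zero.mp (norm_eq_zero.mp hx0)
    have ht : p.t = q.t := by linarith
    cases p; cases q; simp_all

open RealInnerProductSpace OrderDual

section InnerProductSpace

variable {E : Type*} [NormedAddCommGroup E] [InnerProductSpace ℝ E]

theorem norm_smul_add_smul_sq_of_inner_eq_zero {a w : E} (h : ⟪a, w⟫ = 0) (κ s : ℝ) :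
    ‖κ • a + s • w‖ ^ 2 = κ ^ 2 * ‖a‖ ^ 2 + s ^ 2 * ‖w‖ ^ 2 := by
  rw [norm_add_sq_real, real_inner_smul_left, real_inner_smul_right, h, norm_smul, norm_smul,
    mul_pow, mul_pow, Real.norm_eq_abs, Real.norm_eq_abs, sq_abs, sq_abs]
  ring

theorem exists_norm_eq_one_inner_eq_zero [FiniteDimensional ℝ E] (hE : 2 ≤ Module.finrank ℝ E)
    (a : E) : ∃ w : E, ‖w‖ = 1 ∧ ⟪a, w⟫ = 0 := by
  have hK : (ℝ ∙ a)ᗮ ≠ ⊥ := by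
    intro h
    have := Submodule.finrank_add_finrank_orthogonal (ℝ ∙ a)
    have : Module.finrank ℝ (ℝ ∙ a) ≤ 1 := (finrank_span_le_card {a}).trans (by simp)
    rw [h, finrank_bot] at *
    omega
  obtain ⟨w, hw, hw0⟩ := Submodule.exists_mem_ne_zero_of_ne_bot hK
  refine ⟨‖w‖⁻¹ • w, norm_smul_inv_norm hw0, ?_⟩
  rw [real_inner_smul_right, Submodule.mem_orthogonal_singleton_iff_inner_right.mp hw, mul_zero]

theorem exists_ne_norm_eq_one_lt_inner [FiniteDimensional ℝ E] (hE : 2 ≤ Module.finrank ℝ E)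
    {a : E} {D : ℝ} (h : |D| < ‖a‖) :
    ∃ v₁ v₂ : E, v₁ ≠ v₂ ∧ ‖v₁‖ = 1 ∧ ‖v₂‖ = 1 ∧ D < ⟪v₁, a⟫ ∧ D < ⟪v₂, a⟫ := by
  obtain ⟨w, hw, haw⟩ := exists_norm_eq_one_inner_eq_zero hE a
  have ha : 0 < ‖a‖ := (abs_nonneg D).trans_lt h
  -- `κ • a ± s • w` are unit vectors with inner product `(‖a‖ + |D|) / 2 > D` with `a`
  set κ := (‖a‖ + |D|) / (2 * ‖a‖ ^ 2) with hκdef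
  have hκ : κ * ‖a‖ ^ 2 = (‖a‖ + |D|) / 2 := by rw [hκdef]; field_simp
  have hκ1 : (κ * ‖a‖) ^ 2 < 1 := by
    have : κ * ‖a‖ = (‖a‖ + |D|) / (2 * ‖a‖) := by rw [hκdef]; field_simp
    rw [this, div_pow, div_lt_one (by positivity)]
    nlinarith [abs_nonneg D]
  set s := √(1 - (κ * ‖a‖) ^ 2)
  have hs : 0 < s := Real.sqrt_pos.2 (by linarith)
  have hs2 : s ^ 2 = 1 - (κ * ‖a‖) ^ 2 := Real.sq_sqrt (by linarith)
  have hnorm (t : ℝ) (ht : t ^ 2 = s ^ 2) : ‖κ • a + t • w‖ = 1 := by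
    have := norm_smul_add_smul_sq_of_inner_eq_zero haw κ t
    rw [ht, hs2, hw] at this
    exact (pow_eq_one_iff_of_nonneg (norm_nonneg _) two_ne_zero).1 (by linarith)
  have hinner (t : ℝ) : D < ⟪κ • a + t • w, a⟫ := by
    rw [inner_add_left, real_inner_smul_left, real_inner_smul_left, real_inner_comm a w, haw,
      real_inner_self_eq_norm_sq, hκ]
    linarith [le_abs_self D]
  refine ⟨κ • a + s • w, κ • a + (-s) • w, ?_, hnorm s rfl, hnorm (-s) (neg_sq s),
    hinner s, hinner (-s)⟩
  intro heq
  have : (2 * s) • w = 0 := by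
    rw [two_mul, add_smul]
    linear_combination (norm := module) heq
  rcases smul_eq_zero.1 this with h2s | hw0
  · linarith
  · simp [hw0] at hw

end InnerProductSpace

namespace Mink

variable {d : ℕ}

theorem le_def {p q : Mink d} : p ≤ q ↔ ‖q.x - p.x‖ ≤ q.t - p.t := Iff.rfl

theorem abs_sub_t_lt_norm_sub_x {p q : Mink d} (hpq : ¬p ≤ q) (hqp : ¬q ≤ p) :
    |q.t - p.t| < ‖q.x - p.x‖ := by
  rw [le_def, not_le] at hpq hqp
  rw [norm_sub_rev] at hqp
  exact abs_lt.2 ⟨by linarith, hpq⟩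

def lightRay (p : Mink d) (v : EuclideanSpace ℝ (Fin d)) (μ : ℝ) : Mink d :=
  ⟨p.t + μ, p.x + μ • v⟩

theorem exists_lightRay_mem_upperBounds {p q : Mink d} (h : |q.t - p.t| < ‖q.x - p.x‖)
    {v : EuclideanSpace ℝ (Fin d)} (hv : ‖v‖ = 1) (hvq : q.t - p.t < ⟪v, q.x - p.x⟫) :
    ∃ μ > 0, lightRay p v μ ∈ upperBounds {p, q} := by
  set a := q.x - p.x
  set D := q.t - p.t
  have hD : D ^ 2 < ‖a‖ ^ 2 := sq_lt_sq.2 (by rwa [abs_norm])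
  have hva : ⟪v, a⟫ ≤ ‖a‖ := by simpa [hv] using real_inner_le_norm v a
  -- `μ` solves `‖μ • v - a‖ = μ - D`: `lightRay p v μ` lies on the light cone of `q` as well
  set μ := (‖a‖ ^ 2 - D ^ 2) / (2 * (⟪v, a⟫ - D)) with hμdef
  have hμ : 2 * μ * (⟪v, a⟫ - D) = ‖a‖ ^ 2 - D ^ 2 := by
    rw [hμdef]; field_simp [(sub_pos.2 hvq).ne']
  have hμ0 : 0 < μ := div_pos (by linarith) (by linarith)
  have hμD : D ≤ μ := by
    rcases le_or_gt D 0 with hD0 | hD0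
    · linarith
    · nlinarith [sq_nonneg (‖a‖ - D)]
  have hnorm : ‖μ • v - a‖ = μ - D := by
    refine (pow_left_inj₀ (norm_nonneg _) (sub_nonneg.2 hμD) two_ne_zero).1 ?_
    rw [norm_sub_sq_real, real_inner_smul_left, norm_smul, hv, Real.norm_of_nonneg hμ0.le]
    linear_combination -hμ
  refine ⟨μ, hμ0, ?_⟩
  rintro r (rfl | rfl) <;> rw [le_def] <;> dsimp only [lightRay]
  · simp [norm_smul, hv, abs_of_pos hμ0]
  · rw [show p.x + μ • v - r.x = μ • v - a by simp only [a]; abel, hnorm]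
    linarith

theorem x_sub_eq_smul_of_le_lightRay {p m : Mink d} {v : EuclideanSpace ℝ (Fin d)}
    (hv : ‖v‖ = 1) {μ : ℝ} (hμ : 0 < μ) (hpm : p ≤ m) (hm : m ≤ lightRay p v μ) :
    m.x - p.x = (m.t - p.t) • v := by
  set u := m.x - p.x
  rw [le_def] at hpm hm
  dsimp only [lightRay] at hm
  rw [show p.x + μ • v - m.x = μ • v - u by simp only [u]; abel] at hm
  have hμv : ‖μ • v‖ = μ := by rw [norm_smul, hv, mul_one, Real.norm_of_nonneg hμ.le]
  -- the triangle inequality `‖μ • v‖ ≤ ‖u‖ + ‖μ • v - u‖` is an equality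
  have htri := norm_add_le u (μ • v - u)
  rw [add_sub_cancel, hμv] at htri
  have hu : ‖u‖ = m.t - p.t := by linarith
  have hray : SameRay ℝ u (μ • v) := by
    have h : SameRay ℝ u (μ • v - u) :=
      sameRay_iff_norm_add.2 (by rw [add_sub_cancel, hμv]; linarith)
    simpa using (SameRay.refl u).add_right h
  have := hray.norm_smul_eq
  rw [hμv, hu, smul_comm] at this
  exact (smul_right_injective _ hμ.ne' this).symm

theorem not_isLUB_pair (hd : 2 ≤ d) {p q m : Mink d} (hpq : ¬p ≤ q) (hqp : ¬q ≤ p) :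
    ¬IsLUB {p, q} m := by
  intro hm
  have h := abs_sub_t_lt_norm_sub_x hpq hqp
  obtain ⟨v₁, v₂, hne, hv₁, hv₂, h₁, h₂⟩ :=
    exists_ne_norm_eq_one_lt_inner (by rwa [finrank_euclideanSpace_fin]) h
  obtain ⟨μ₁, hμ₁, hz₁⟩ := exists_lightRay_mem_upperBounds h hv₁ h₁
  obtain ⟨μ₂, hμ₂, hz₂⟩ := exists_lightRay_mem_upperBounds h hv₂ h₂
  have hpm : p ≤ m := hm.1 (by simp)
  have e₁ := x_sub_eq_smul_of_le_lightRay hv₁ hμ₁ hpm (hm.2 hz₁)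
  have e₂ := x_sub_eq_smul_of_le_lightRay hv₂ hμ₂ hpm (hm.2 hz₂)
  -- `m` lies on two distinct light rays from `p`, hence `m = p`
  have ht : m.t = p.t := by
    have : (m.t - p.t) • (v₁ - v₂) = 0 := by rw [smul_sub, ← e₁, ← e₂, sub_self]
    have := (smul_eq_zero.1 this).resolve_right (sub_ne_zero.2 hne)
    linarith
  have hx : m.x = p.x := by rw [← sub_eq_zero, e₁, ht, sub_self, zero_smul]
  have hqm : q ≤ m := hm.1 (by simp)
  rw [le_def, ht, hx] at hqm
  exact hqp hqm

def timeReversal : (Mink d)ᵒᵈ ≃o Mink d where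
  toFun p := ⟨-(ofDual p).t, -(ofDual p).x⟩
  invFun p := toDual ⟨-p.t, -p.x⟩
  left_inv p := by simp only [neg_neg]; rfl
  right_inv p := by simp only [ofDual_toDual, neg_neg]
  map_rel_iff' {p q} := by
    simp only [Equiv.coe_fn_mk, le_def, neg_sub_neg]
    exact Iff.rfl

theorem not_isGLB_pair (hd : 2 ≤ d) {p q m : Mink d} (hpq : ¬p ≤ q) (hqp : ¬q ≤ p) :
    ¬IsGLB {p, q} m := by
  intro hm
  have := timeReversal.isLUB_image'.2 hm.dual
  change IsLUB (timeReversal '' {toDual p, toDual q}) _ at this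
  rw [Set.image_pair] at this
  refine not_isLUB_pair hd ?_ ?_ this <;> simpa

end Mink

/-- For `d ≥ 2`, Minkowski space-time is join-free and meet-free: any two
incomparable points `p, q` have no least upper bound and no greatest lower bound. -/
theorem mink_joinFree_meetFree (d : ℕ) (hd : 2 ≤ d) (p q : Mink d)
    (h₁ : ¬ p ≤ q) (h₂ : ¬ q ≤ p) :
    (¬ ∃ m : Mink d, IsLUB ({p, q} : Set (Mink d)) m) ∧
    (¬ ∃ m : Mink d, IsGLB ({p, q} : Set (Mink d)) m) :=
  ⟨fun ⟨_, hm⟩ => Mink.not_isLUB_pair hd h₁ h₂ hm,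
    fun ⟨_, hm⟩ => Mink.not_isGLB_pair hd h₁ h₂ hm⟩
end

section
/- A partially ordered set T is conical if and only if it satisfies location symmetry. -/
/-- Location symmetry: for every nonempty index type `I`, every finite `K ⊆ T` and
every family `(L i)` of nonempty finite subsets of `T` with
`f(K) ∩ f(L i) = f(K) ∩ f(L j)` for all `i, j`, either `f(K) ⊆ ⋂ i, f(L i)`, or
there is a nonempty `M ⊆ T` with `span(K ∪ L i) ∖ K = M` for all `i`. -/
def LocationSymmetry (T : Type*) [PartialOrder T] : Prop :=
  ∀ (I : Type) (_ : Nonempty I) (K : Set T) (L : I → Set T),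
    K.Finite → (∀ i, (L i).Finite) → (∀ i, (L i).Nonempty) →
    (∀ i j, jointFuture K ∩ jointFuture (L i) = jointFuture K ∩ jointFuture (L j)) →
    (jointFuture K ⊆ ⋂ i, jointFuture (L i)) ∨
    (∃ M : Set T, M.Nonempty ∧ ∀ i, spanS (K ∪ L i) \ K = M)

/-! A finite set `L` has a minimal subset with the same joint future, and every such subset lies
in `span L ⊆ L`; hence `f (span L) = f L`. Conical ⇒ location symmetry: the sets `span (K ∪ L i)`
all coincide, being spans of sets with the same joint future. If this common span lies in `K`,
then `f K ⊆ f (span (K ∪ L i)) = f (K ∪ L i) ⊆ f (L i)`; otherwise `span (K ∪ L i) \ K` is the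
required `M`. Location symmetry ⇒ conical: apply it to `K = ∅` and the two-member family
`L₁, L₂`. The first alternative makes `f L₁ = f L₂ = T`, where both spans are empty since
already `f ∅ = T`. -/

section

variable {T : Type*} [PartialOrder T]

lemma jointFuture_anti : Antitone (jointFuture : Set T → Set T) :=
  fun _ _ h => Set.biInter_subset_biInter_left h

lemma jointFuture_union (A B : Set T) :
    jointFuture (A ∪ B) = jointFuture A ∩ jointFuture B :=
  Set.biInter_union A B _

lemma jointFuture_empty : jointFuture (∅ : Set T) = Set.univ :=
  Set.biInter_empty _

lemma Set.Finite.exists_minimal_jointFuture_eq {L : Set T} (hL : L.Finite) :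
    ∃ L' ⊆ L, jointFuture L' = jointFuture L ∧
      ∀ L'' ⊂ L', jointFuture L'' ≠ jointFuture L := by
  obtain ⟨L', ⟨hL'L, hf⟩, hmin⟩ := (hL.finite_subsets.subset fun _ h => h.1).exists_minimal
    (⟨L, subset_rfl, rfl⟩ : ∃ L', L' ⊆ L ∧ jointFuture L' = jointFuture L)
  exact ⟨L', hL'L, hf, fun L'' hlt heq =>
    hlt.2 (hmin ⟨hlt.1.trans hL'L, heq⟩ hlt.1)⟩

lemma spanS_subset (L : Set T) : spanS L ⊆ L :=
  fun _ ⟨_, hL'L, hx, _⟩ => hL'L hx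

lemma jointFuture_spanS {L : Set T} (hL : L.Finite) :
    jointFuture (spanS L) = jointFuture L := by
  obtain ⟨L', hL'L, hf, hmin⟩ := hL.exists_minimal_jointFuture_eq
  have hL'span : L' ⊆ spanS L := fun x hx => ⟨L', hL'L, hx, hf, hmin⟩
  exact (hf ▸ jointFuture_anti hL'span).antisymm (jointFuture_anti (spanS_subset L))

lemma spanS_eq_empty_of_jointFuture_eq_univ {L : Set T} (h : jointFuture L = Set.univ) :
    spanS L = ∅ :=
  Set.eq_empty_of_forall_notMem fun _ ⟨_, _, hx, _, hmin⟩ =>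
    hmin ∅ (Set.empty_ssubset.2 ⟨_, hx⟩) (jointFuture_empty.trans h.symm)

lemma LocationSymmetry.of_conical (hC : Conical T) : LocationSymmetry T := by
  intro I ⟨i₀⟩ K L hK hLfin hLne hEq
  have hspan : ∀ i, spanS (K ∪ L i) = spanS (K ∪ L i₀) := fun i =>
    hC _ _ (hK.union (hLfin i)) (hK.union (hLfin i₀)) (hLne i).inr (hLne i₀).inr
      (by rw [jointFuture_union, jointFuture_union, hEq i i₀])
  by_cases hM : (spanS (K ∪ L i₀) \ K).Nonempty
  · exact .inr ⟨_, hM, fun i => by rw [hspan i]⟩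
  refine .inl (Set.subset_iInter fun i => ?_)
  have hsub : spanS (K ∪ L i) ⊆ K := by
    rwa [hspan i, ← Set.sdiff_eq_empty, ← Set.not_nonempty_iff_eq_empty]
  calc jointFuture K ⊆ jointFuture (spanS (K ∪ L i)) := jointFuture_anti hsub
    _ = jointFuture (K ∪ L i) := jointFuture_spanS (hK.union (hLfin i))
    _ ⊆ jointFuture (L i) := by rw [jointFuture_union]; exact Set.inter_subset_right

lemma Conical.of_locationSymmetry (hLS : LocationSymmetry T) : Conical T := by
  intro L₁ L₂ h₁ h₂ hne₁ hne₂ heq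
  rcases hLS Bool ⟨true⟩ ∅ (fun b => bif b then L₁ else L₂) Set.finite_empty
      (Bool.forall_bool.2 ⟨h₂, h₁⟩) (Bool.forall_bool.2 ⟨hne₂, hne₁⟩) (by simp [heq])
    with h | ⟨M, -, hM⟩
  · rw [jointFuture_empty] at h
    have huniv : jointFuture L₁ = Set.univ :=
      Set.univ_subset_iff.1 (h.trans (Set.iInter_subset _ true))
    rw [spanS_eq_empty_of_jointFuture_eq_univ huniv,
      spanS_eq_empty_of_jointFuture_eq_univ (heq ▸ huniv)]
  · simpa using (hM true).trans (hM false).symm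

end

/-- A partially ordered set is conical if and only if it satisfies location symmetry. -/
theorem conical_iff_locationSymmetry (T : Type*) [PartialOrder T] :
    Conical T ↔ LocationSymmetry T :=
  ⟨LocationSymmetry.of_conical, Conical.of_locationSymmetry⟩
end

section
/- Let D be an intervention family on V and let X, Y, Z be pairwise disjoint finite subsets of V with X, Y nonempty. If X ⊨ Y|do(Z) holds and is Red₃, i.e., there is a nonempty s_Z ⊆ Z with both s_Z ⊭ Y|do(X ∪ (Z∖s_Z)) and s_Z ⊭ Y|do(Z∖s_Z), then X ⊨ Y|do(Z∖s_Z) holds; in particular there exists s̃_Z ⊊ Z with X ⊨ Y|do(s̃_Z). -/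
/-- An intervention family on a finite type `V` of observed variables with value
types `α i`: to every finite subset `I ⊆ V` and every assignment of values on `I`
it assigns a probability mass function on full assignments. -/
abbrev InterventionFamily (V : Type) [DecidableEq V] (α : V → Type) : Type :=
  ∀ I : Finset V, (∀ i : I, α i) → PMF (∀ i, α i)

/-- Restriction of a full assignment to the coordinates in `Y`. -/
def restrictTo {V : Type} {α : V → Type} (Y : Finset V) (g : ∀ i, α i) :
    ∀ i : Y, α i := fun i => g i

/-- Combination of an assignment on `X` and an assignment on `Z` into an
assignment on `X ∪ Z` (giving precedence to the one on `X`). -/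
def combine {V : Type} [DecidableEq V] {α : V → Type} {X Z : Finset V}
    (xv : ∀ i : X, α i) (zv : ∀ i : Z, α i) : ∀ i : (X ∪ Z : Finset V), α i :=
  fun i => if h : (i : V) ∈ X then xv ⟨i, h⟩
    else zv ⟨i, (Finset.mem_union.mp i.2).resolve_left h⟩

/-- The affects relation `X ⊨ Y|do(Z)`: there exist assignments `x` on `X` and `z`
on `Z` such that the marginal on `Y` of the intervened distribution `D (X∪Z) (x⊕z)`
differs from the marginal on `Y` of `D Z z`. -/
def affects {V : Type} [DecidableEq V] {α : V → Type}
    (D : InterventionFamily V α) (X Y Z : Finset V) : Prop :=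
  ∃ (xv : ∀ i : X, α i) (zv : ∀ i : Z, α i),
    PMF.map (restrictTo Y) (D (X ∪ Z) (combine xv zv)) ≠
      PMF.map (restrictTo Y) (D Z zv)

/-!
Split an assignment `z` on `Z` into its parts `s` on `s_Z` and `w` on `Z ∖ s_Z`. Since `X` and `s_Z`
are disjoint, `D (X ∪ Z) (x ⊕ z)` is `D (s_Z ∪ (X ∪ (Z ∖ s_Z))) (s ⊕ (x ⊕ w))`, and the first
non-effect of `s_Z` gives it the `Y`-marginal of `D (X ∪ (Z ∖ s_Z)) (x ⊕ w)`; likewise `D Z z` is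
`D (s_Z ∪ (Z ∖ s_Z)) (s ⊕ w)`, which by the second non-effect has the `Y`-marginal of `D (Z ∖ s_Z) w`.
So any pair `x, z` witnessing `X ⊨ Y|do(Z)` yields the witness `x, w` for `X ⊨ Y|do(Z∖s_Z)`.
-/

theorem apply_congr_of_finset_eq {V β : Type*} {α : V → Type*}
    (F : ∀ A : Finset V, (∀ i : A, α i) → β) {A B : Finset V} (hAB : A = B)
    {f : ∀ i : A, α i} {g : ∀ i : B, α i}
    (hfg : ∀ i (hA : i ∈ A) (hB : i ∈ B), f ⟨i, hA⟩ = g ⟨i, hB⟩) :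
    F A f = F B g := by
  subst hAB
  congr 1
  funext i
  exact hfg i i.2 i.2

namespace InterventionFamily

variable {V : Type} [DecidableEq V] {α : V → Type} (D : InterventionFamily V α)

theorem apply_eq_apply_combine_restrict {s Z : Finset V} (hs : s ⊆ Z) (zv : ∀ i : Z, α i) :
    D Z zv = D (s ∪ Z \ s)
      (combine (Finset.restrict₂ hs zv) (Finset.restrict₂ Finset.sdiff_subset zv)) := by
  refine apply_congr_of_finset_eq D (Finset.union_sdiff_of_subset hs).symm fun i _ _ => ?_
  simp only [combine, Finset.restrict₂]
  split_ifs <;> rfl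

theorem apply_union_eq_apply_combine_restrict {X s Z : Finset V} (hXs : Disjoint X s)
    (hs : s ⊆ Z) (xv : ∀ i : X, α i) (zv : ∀ i : Z, α i) :
    D (X ∪ Z) (combine xv zv) = D (s ∪ (X ∪ Z \ s))
      (combine (Finset.restrict₂ hs zv) (combine xv (Finset.restrict₂ Finset.sdiff_subset zv))) := by
  have hunion : X ∪ Z = s ∪ (X ∪ Z \ s) := by
    rw [Finset.union_left_comm, Finset.union_sdiff_of_subset hs]
  refine apply_congr_of_finset_eq D hunion fun i _ _ => ?_
  simp only [combine, Finset.restrict₂]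
  split_ifs with hX hsi <;> first | rfl | exact absurd hsi (Finset.disjoint_left.mp hXs hX)

end InterventionFamily

theorem not_affects_iff {V : Type} [DecidableEq V] {α : V → Type}
    {D : InterventionFamily V α} {X Y Z : Finset V} :
    ¬ affects D X Y Z ↔ ∀ (xv : ∀ i : X, α i) (zv : ∀ i : Z, α i),
      PMF.map (restrictTo Y) (D (X ∪ Z) (combine xv zv)) = PMF.map (restrictTo Y) (D Z zv) := by
  simp only [affects, not_exists, not_ne_iff]

theorem affects_sdiff_of_not_affects {V : Type} [DecidableEq V] {α : V → Type}
    {D : InterventionFamily V α} {X Y Z s : Finset V} (hXZ : Disjoint X Z) (hs : s ⊆ Z)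
    (haff : affects D X Y Z) (hred1 : ¬ affects D s Y (X ∪ Z \ s))
    (hred2 : ¬ affects D s Y (Z \ s)) :
    affects D X Y (Z \ s) := by
  obtain ⟨xv, zv, hne⟩ := haff
  refine ⟨xv, Finset.restrict₂ Finset.sdiff_subset zv, fun h => hne ?_⟩
  rw [D.apply_union_eq_apply_combine_restrict (hXZ.mono_right hs) hs,
    not_affects_iff.mp hred1, h, ← not_affects_iff.mp hred2,
    ← D.apply_eq_apply_combine_restrict hs]

theorem red3_reduce_general {V : Type} [DecidableEq V] {α : V → Type}
    (D : InterventionFamily V α) (X Y Z : Finset V)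
    (hXZ : Disjoint X Z)
    (haff : affects D X Y Z)
    (sZ : Finset V) (hsub : sZ ⊆ Z) (hne : sZ.Nonempty)
    (hred1 : ¬ affects D sZ Y (X ∪ (Z \ sZ)))
    (hred2 : ¬ affects D sZ Y (Z \ sZ)) :
    affects D X Y (Z \ sZ) ∧
      ∃ s : Finset V, s ⊂ Z ∧ affects D X Y s := by
  have h := affects_sdiff_of_not_affects hXZ hsub haff hred1 hred2
  exact ⟨h, Z \ sZ, Finset.sdiff_ssubset hsub hne, h⟩

/-- If `X ⊨ Y|do(Z)` holds and is Red₃, witnessed by a nonempty `s_Z ⊆ Z` with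
both `s_Z ⊭ Y|do(X ∪ (Z∖s_Z))` and `s_Z ⊭ Y|do(Z∖s_Z)`, then `X ⊨ Y|do(Z∖s_Z)`
holds; in particular there is a strict subset `s̃_Z ⊊ Z` with `X ⊨ Y|do(s̃_Z)`. -/
theorem red3_reduce {V : Type} [Fintype V] [DecidableEq V] {α : V → Type}
    [∀ i, Fintype (α i)] [∀ i, Nonempty (α i)]
    (D : InterventionFamily V α) (X Y Z : Finset V)
    (hXY : Disjoint X Y) (hXZ : Disjoint X Z) (hYZ : Disjoint Y Z)
    (hX : X.Nonempty) (hY : Y.Nonempty)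
    (haff : affects D X Y Z)
    (sZ : Finset V) (hsub : sZ ⊆ Z) (hne : sZ.Nonempty)
    (hred1 : ¬ affects D sZ Y (X ∪ (Z \ sZ)))
    (hred2 : ¬ affects D sZ Y (Z \ sZ)) :
    affects D X Y (Z \ sZ) ∧
      ∃ s : Finset V, s ⊂ Z ∧ affects D X Y s :=
  red3_reduce_general D X Y Z hXZ haff sZ hsub hne hred1 hred2
end
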